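/- arXiv:2407.08870 — 3 statements merged into one kernel-verified Lean document; each statement's English description precedes it below -/
import Mathlib

section
/- For n ≥ 3, the 1-nearly edge independence number of the path P_n on n vertices equals ⌊(n+1)/2⌋. -/
open scoped Classical

/-- Two edges (as unordered pairs) share a vertex. -/
def ShareVertex {V : Type*} (e f : Sym2 V) : Prop := ∃ v, v ∈ e ∧ v ∈ f

/-- `M` is a 1-nearly edge independent set of `G`: a set of edges of `G` containing
exactly one pair of distinct edges sharing a common vertex. -/
def IsOneNearlyEdgeIndep {V : Type*} (G : SimpleGraph V) (M : Finset (Sym2 V)) : Prop :=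
  ↑M ⊆ G.edgeSet ∧
    (M.offDiag.filter fun p => ShareVertex p.1 p.2).card = 2

/-- The 1-nearly edge independence number `α'₁(G)`: maximum cardinality of a
1-nearly edge independent set, `0` if none exists. -/
noncomputable def edgeAlpha1 {V : Type*} (G : SimpleGraph V) : ℕ :=
  sSup {k | ∃ M : Finset (Sym2 V), IsOneNearlyEdgeIndep G M ∧ M.card = k}

/-- `I` is a 1-nearly vertex independent set of `G`: exactly one pair of distinct
vertices of `I` is adjacent in `G`. -/
def IsOneNearlyVertexIndep {V : Type*} (G : SimpleGraph V) (I : Finset V) : Prop :=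
  (I.offDiag.filter fun p => G.Adj p.1 p.2).card = 2

/-- The 1-nearly vertex independence number `α₁(G)`. -/
noncomputable def vertexAlpha1 {V : Type*} (G : SimpleGraph V) : ℕ :=
  sSup {k | ∃ I : Finset V, IsOneNearlyVertexIndep G I ∧ I.card = k}

/-!
Deleting one edge of the unique adjacent pair `{a, b}` of a 1-nearly edge independent set `M`
leaves a matching, which covers `2 (|M| - 1)` vertices; an endpoint of `a` outside `b` is covered
by no edge of that matching, so `2 |M| - 1 ≤ n`. Conversely, in `P_n` the edge `{0, 1}` together
with the alternate edges `{1, 2}, {3, 4}, …` has exactly one adjacent pair and `⌊(n + 1) / 2⌋`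
edges.
-/

open Finset

theorem Finset.card_filter_offDiag_eq_two_iff {α : Type*} {s : Finset α} {r : α → α → Prop}
    (hr : ∀ a b, r a b → r b a) :
    (s.offDiag.filter fun p => r p.1 p.2).card = 2 ↔
      ∃ a ∈ s, ∃ b ∈ s, a ≠ b ∧ r a b ∧
        ∀ c ∈ s, ∀ d ∈ s, c ≠ d → r c d → (c = a ∧ d = b) ∨ (c = b ∧ d = a) := by
  have mem_filter_iff : ∀ c d, (c, d) ∈ s.offDiag.filter (fun p => r p.1 p.2) ↔
      c ∈ s ∧ d ∈ s ∧ c ≠ d ∧ r c d := by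
    simp [and_assoc]
  constructor
  · intro h
    obtain ⟨⟨a, b⟩, q, hne, hpq⟩ := card_eq_two.1 h
    obtain ⟨ha, hb, hab, hrab⟩ := (mem_filter_iff a b).1 (by simp [hpq])
    have hq : q = (b, a) := by
      have hba : (b, a) ∈ ({(a, b), q} : Finset _) := by
        rw [← hpq]; exact (mem_filter_iff b a).2 ⟨hb, ha, hab.symm, hr a b hrab⟩
      simp only [mem_insert, mem_singleton, Prod.mk.injEq] at hba
      rcases hba with ⟨rfl, -⟩ | rfl
      · exact (hab rfl).elim
      · rfl
    refine ⟨a, ha, b, hb, hab, hrab, fun c hc d hd hcd hrcd => ?_⟩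
    have hcd' := (mem_filter_iff c d).2 ⟨hc, hd, hcd, hrcd⟩
    simpa [hpq, hq] using hcd'
  · rintro ⟨a, ha, b, hb, hab, hrab, huniq⟩
    have hpair : s.offDiag.filter (fun p => r p.1 p.2) = {(a, b), (b, a)} := by
      ext ⟨c, d⟩
      rw [mem_filter_iff]
      simp only [mem_insert, mem_singleton, Prod.mk.injEq]
      constructor
      · rintro ⟨hc, hd, hcd, hrcd⟩
        exact huniq c hc d hd hcd hrcd
      · rintro (⟨rfl, rfl⟩ | ⟨rfl, rfl⟩)
        exacts [⟨ha, hb, hab, hrab⟩, ⟨hb, ha, hab.symm, hr _ _ hrab⟩]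
    rw [hpair, card_pair (by simp [hab])]

theorem Sym2.exists_mem_notMem_of_ne {α : Type*} {z z' : Sym2 α} (hz : ¬z.IsDiag) (h : z ≠ z') :
    ∃ v ∈ z, v ∉ z' := by
  induction z using Sym2.ind with
  | _ x y =>
    by_contra! hall
    exact h (Sym2.eq_of_ne_mem (by simpa using hz) (Sym2.mem_mk_left x y) (Sym2.mem_mk_right x y)
      (hall x (Sym2.mem_mk_left x y)) (hall y (Sym2.mem_mk_right x y)))

section OneNearlyEdgeIndep

variable {V : Type*} {G : SimpleGraph V}

theorem ShareVertex.symm {e f : Sym2 V} (h : ShareVertex e f) : ShareVertex f e :=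
  let ⟨v, he, hf⟩ := h
  ⟨v, hf, he⟩

theorem isOneNearlyEdgeIndep_iff {M : Finset (Sym2 V)} :
    IsOneNearlyEdgeIndep G M ↔ ↑M ⊆ G.edgeSet ∧
      ∃ a ∈ M, ∃ b ∈ M, a ≠ b ∧ ShareVertex a b ∧
        ∀ c ∈ M, ∀ d ∈ M, c ≠ d → ShareVertex c d → (c = a ∧ d = b) ∨ (c = b ∧ d = a) := by
  rw [IsOneNearlyEdgeIndep, card_filter_offDiag_eq_two_iff (r := ShareVertex) fun _ _ => ShareVertex.symm]

theorem card_biUnion_toFinset_of_pairwise {M : Finset (Sym2 V)} (hM : ↑M ⊆ G.edgeSet)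
    (hdisj : (M : Set (Sym2 V)).Pairwise fun c d => ¬ShareVertex c d) :
    #(M.biUnion Sym2.toFinset) = 2 * #M := by
  rw [card_biUnion, sum_congr rfl fun e he =>
    Sym2.card_toFinset_of_not_isDiag e (G.not_isDiag_of_mem_edgeSet (hM he)), sum_const,
    smul_eq_mul, mul_comm]
  intro c hc d hd hcd
  rw [Function.onFun, disjoint_left]
  exact fun v hvc hvd => hdisj hc hd hcd ⟨v, Sym2.mem_toFinset.1 hvc, Sym2.mem_toFinset.1 hvd⟩

theorem IsOneNearlyEdgeIndep.card_le [Fintype V] {M : Finset (Sym2 V)}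
    (h : IsOneNearlyEdgeIndep G M) : #M ≤ (Fintype.card V + 1) / 2 := by
  obtain ⟨hMG, a, ha, b, -, hab, -, huniq⟩ := isOneNearlyEdgeIndep_iff.1 h
  have hmatching : (M.erase a : Set (Sym2 V)).Pairwise fun c d => ¬ShareVertex c d := by
    intro c hc d hd hcd hshare
    rw [coe_erase, Set.mem_sdiff, Set.mem_singleton_iff] at hc hd
    rcases huniq c hc.1 d hd.1 hcd hshare with ⟨hca, -⟩ | ⟨-, hda⟩
    exacts [hc.2 hca, hd.2 hda]
  obtain ⟨v, hva, hvb⟩ :=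
    Sym2.exists_mem_notMem_of_ne (G.not_isDiag_of_mem_edgeSet (hMG ha)) hab
  have hv : v ∉ (M.erase a).biUnion Sym2.toFinset := by
    simp only [mem_biUnion, Sym2.mem_toFinset, not_exists, not_and]
    intro c hc hvc
    rcases huniq a ha c (mem_of_mem_erase hc) (ne_of_mem_erase hc).symm ⟨v, hva, hvc⟩ with
      ⟨-, rfl⟩ | ⟨rfl, -⟩
    exacts [hvb hvc, hab rfl]
  have hcover := card_le_univ (insert v ((M.erase a).biUnion Sym2.toFinset))
  rw [card_insert_of_notMem hv,
    card_biUnion_toFinset_of_pairwise (subset_trans (coe_subset.2 (erase_subset a M)) hMG)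
      hmatching, card_erase_of_mem ha] at hcover
  have hpos : 0 < #M := card_pos.2 ⟨a, ha⟩
  omega

theorem edgeAlpha1_eq {k : ℕ} (hex : ∃ M, IsOneNearlyEdgeIndep G M ∧ #M = k)
    (hle : ∀ M, IsOneNearlyEdgeIndep G M → #M ≤ k) : edgeAlpha1 G = k :=
  IsGreatest.csSup_eq ⟨hex, by rintro _ ⟨M, hM, rfl⟩; exact hle M hM⟩

end OneNearlyEdgeIndep

section PathGraph

open Fin.NatCast

def pathEdge (n : ℕ) [NeZero n] (i : ℕ) : Sym2 (Fin n) := s((i : Fin n), ((i + 1 : ℕ) : Fin n))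

variable {n : ℕ} [NeZero n]

theorem mem_pathEdge {i : ℕ} (hi : i + 1 < n) {v : Fin n} :
    v ∈ pathEdge n i ↔ (v : ℕ) = i ∨ (v : ℕ) = i + 1 := by
  rw [pathEdge, Sym2.mem_iff, Fin.ext_iff, Fin.ext_iff, Fin.val_cast_of_lt (by omega),
    Fin.val_cast_of_lt hi]

theorem pathEdge_mem_edgeSet {i : ℕ} (hi : i + 1 < n) :
    pathEdge n i ∈ (SimpleGraph.pathGraph n).edgeSet := by
  rw [pathEdge, SimpleGraph.mem_edgeSet, SimpleGraph.pathGraph_adj, Fin.val_cast_of_lt (by omega),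
    Fin.val_cast_of_lt hi]
  exact Or.inl rfl

theorem shareVertex_pathEdge_iff {i j : ℕ} (hi : i + 1 < n) (hj : j + 1 < n) :
    ShareVertex (pathEdge n i) (pathEdge n j) ↔ i ≤ j + 1 ∧ j ≤ i + 1 := by
  constructor
  · rintro ⟨v, hvi, hvj⟩
    rw [mem_pathEdge hi] at hvi
    rw [mem_pathEdge hj] at hvj
    omega
  · intro h
    refine ⟨⟨max i j, by omega⟩, ?_, ?_⟩
    · rw [mem_pathEdge hi, Fin.val_mk]; omega
    · rw [mem_pathEdge hj, Fin.val_mk]; omega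

theorem pathEdge_inj {i j : ℕ} (hi : i + 1 < n) (hj : j + 1 < n) :
    pathEdge n i = pathEdge n j ↔ i = j := by
  refine ⟨fun h => ?_, congrArg _⟩
  have hsub : ∀ v : Fin n, (v : ℕ) = i ∨ (v : ℕ) = i + 1 → (v : ℕ) = j ∨ (v : ℕ) = j + 1 :=
    fun v hv => (mem_pathEdge hj).1 (h ▸ (mem_pathEdge hi).2 hv)
  have hlow := hsub ⟨i, by omega⟩ (Or.inl rfl)
  have hhigh := hsub ⟨i + 1, hi⟩ (Or.inr rfl)
  simp only at hlow hhigh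
  omega

end PathGraph

theorem exists_isOneNearlyEdgeIndep_pathGraph {n : ℕ} (hn : 3 ≤ n) :
    ∃ M, IsOneNearlyEdgeIndep (SimpleGraph.pathGraph n) M ∧ #M = (n + 1) / 2 := by
  have : NeZero n := ⟨by omega⟩
  -- `2 * 0 - 1 = 0`, so these are the edges `{0, 1}, {1, 2}, {3, 4}, {5, 6}, …`
  have hlt : ∀ k < (n + 1) / 2, 2 * k - 1 + 1 < n := fun k hk => by omega
  refine ⟨(range ((n + 1) / 2)).image fun k => pathEdge n (2 * k - 1), ?_, ?_⟩
  · refine isOneNearlyEdgeIndep_iff.2 ⟨?_, pathEdge n 0, ?_, pathEdge n 1, ?_, ?_, ?_, ?_⟩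
    · simp only [coe_image, coe_range, Set.image_subset_iff]
      exact fun k hk => pathEdge_mem_edgeSet (hlt k hk)
    · exact mem_image.2 ⟨0, mem_range.2 (by omega), rfl⟩
    · exact mem_image.2 ⟨1, mem_range.2 (by omega), rfl⟩
    · rw [Ne, pathEdge_inj (by omega) (by omega)]; omega
    · rw [shareVertex_pathEdge_iff (by omega) (by omega)]; omega
    · simp only [mem_image, mem_range]
      rintro _ ⟨k, hk, rfl⟩ _ ⟨l, hl, rfl⟩ hkl hshare
      rw [Ne, pathEdge_inj (hlt k hk) (hlt l hl)] at hkl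
      rw [shareVertex_pathEdge_iff (hlt k hk) (hlt l hl)] at hshare
      rw [pathEdge_inj (hlt k hk) (by omega), pathEdge_inj (hlt l hl) (by omega),
        pathEdge_inj (hlt k hk) (by omega), pathEdge_inj (hlt l hl) (by omega)]
      omega
  · rw [card_image_of_injOn, card_range]
    intro k hk l hl hkl
    rw [mem_coe, mem_range] at hk hl
    have := (pathEdge_inj (hlt k hk) (hlt l hl)).1 hkl
    omega

theorem edgeAlpha1_pathGraph {n : ℕ} (hn : 3 ≤ n) :
    edgeAlpha1 (SimpleGraph.pathGraph n) = (n + 1) / 2 :=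
  edgeAlpha1_eq (exists_isOneNearlyEdgeIndep_pathGraph hn) fun _ hM => by
    simpa using hM.card_le
end

section
/- For n ≥ 2, the 1-nearly vertex independence number of the path P_n equals ⌊(n+2)/2⌋. -/
open scoped Classical

/-! If `{a, a + 1}` is the only adjacent pair of `I`, moving every vertex beyond `a` one step to the
right turns `I` into a set of naturals below `n + 1` with no two consecutive elements, on which
halving is injective; hence `|I| ≤ ⌊(n + 2) / 2⌋`. The set `{0} ∪ {odd numbers below n}` attains
this bound. -/

open Finset

theorem isOneNearlyVertexIndep_iff {V : Type*} {G : SimpleGraph V} {I : Finset V} :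
    IsOneNearlyVertexIndep G I ↔ ∃ u ∈ I, ∃ v ∈ I, G.Adj u v ∧
      ∀ x ∈ I, ∀ y ∈ I, G.Adj x y → s(x, y) = s(u, v) := by
  unfold IsOneNearlyVertexIndep
  constructor
  · rw [card_eq_two]
    rintro ⟨⟨u, v⟩, q, hne, hpair⟩
    have hmem : ∀ x y, (x, y) ∈ ({(u, v), q} : Finset (V × V)) ↔ x ∈ I ∧ y ∈ I ∧ G.Adj x y := by
      intro x y
      rw [← hpair]
      simp only [mem_filter, mem_offDiag]
      exact ⟨fun h => ⟨h.1.1, h.1.2.1, h.2⟩, fun h => ⟨⟨h.1, h.2.1, h.2.2.ne⟩, h.2.2⟩⟩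
    obtain ⟨hu, hv, huv⟩ := (hmem u v).1 (by simp)
    have hq : q = (v, u) := by
      have := (hmem v u).2 ⟨hv, hu, huv.symm⟩
      simp only [mem_insert, mem_singleton, Prod.mk.injEq] at this
      rcases this with ⟨rfl, -⟩ | h
      · exact absurd rfl huv.ne
      · exact h.symm
    refine ⟨u, hu, v, hv, huv, fun x hx y hy hxy => ?_⟩
    have := (hmem x y).2 ⟨hx, hy, hxy⟩
    simp only [hq, mem_insert, mem_singleton, Prod.mk.injEq] at this
    rcases this with ⟨rfl, rfl⟩ | ⟨rfl, rfl⟩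
    · rfl
    · exact Sym2.eq_swap
  · rintro ⟨u, hu, v, hv, huv, huniq⟩
    suffices h : I.offDiag.filter (fun p => G.Adj p.1 p.2) = {(u, v), (v, u)} by
      exact h ▸ card_pair fun h => huv.ne (Prod.ext_iff.1 h).1
    ext ⟨x, y⟩
    simp only [mem_filter, mem_offDiag, mem_insert, mem_singleton, Prod.mk.injEq]
    constructor
    · rintro ⟨⟨hx, hy, -⟩, hxy⟩
      exact Sym2.eq_iff.1 (huniq x hx y hy hxy)
    · rintro (⟨rfl, rfl⟩ | ⟨rfl, rfl⟩)
      · exact ⟨⟨hu, hv, huv.ne⟩, huv⟩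
      · exact ⟨⟨hv, hu, huv.ne.symm⟩, huv.symm⟩

theorem isOneNearlyVertexIndep_pathGraph_iff {n : ℕ} {I : Finset (Fin n)} :
    IsOneNearlyVertexIndep (SimpleGraph.pathGraph n) I ↔
      ∃ a, a ∈ I.map Fin.valEmbedding ∧ a + 1 ∈ I.map Fin.valEmbedding ∧
        ∀ x ∈ I.map Fin.valEmbedding, x + 1 ∈ I.map Fin.valEmbedding → x = a := by
  simp only [isOneNearlyVertexIndep_iff, SimpleGraph.pathGraph_adj, mem_map, Fin.valEmbedding_apply,
    Sym2.eq_iff, Fin.ext_iff]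
  constructor
  · rintro ⟨u, hu, v, hv, huv, huniq⟩
    obtain ⟨a, ha, b, hb, hab⟩ : ∃ a ∈ I, ∃ b ∈ I, (a : ℕ) + 1 = b := by
      rcases huv with huv | huv
      exacts [⟨u, hu, v, hv, huv⟩, ⟨v, hv, u, hu, huv⟩]
    refine ⟨a, ⟨a, ha, rfl⟩, ⟨b, hb, hab.symm⟩, ?_⟩
    rintro _ ⟨x, hx, rfl⟩ ⟨y, hy, hxy⟩
    have := huniq a ha b hb (Or.inl hab)
    have := huniq x hx y hy (Or.inl hxy.symm)
    omega
  · rintro ⟨a, ⟨u, hu, rfl⟩, ⟨v, hv, huv⟩, huniq⟩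
    refine ⟨u, hu, v, hv, Or.inl huv.symm, fun x hx y hy hxy => ?_⟩
    rcases hxy with hxy | hxy
    · have := huniq x ⟨x, hx, rfl⟩ ⟨y, hy, hxy.symm⟩
      omega
    · have := huniq y ⟨y, hy, rfl⟩ ⟨x, hx, hxy.symm⟩
      omega

theorem card_le_of_forall_add_one_notMem {S : Finset ℕ} {m : ℕ} (hS : ∀ x ∈ S, x < m)
    (h : ∀ x ∈ S, x + 1 ∉ S) : S.card ≤ (m + 1) / 2 := by
  have hinj : Set.InjOn (· / 2) S := by
    intro x hx y hy (hxy : x / 2 = y / 2)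
    by_contra hne
    obtain rfl | rfl : x + 1 = y ∨ y + 1 = x := by omega
    exacts [h x hx hy, h y hy hx]
  simpa using card_le_card_of_injOn (· / 2) (t := range ((m + 1) / 2))
    (fun x hx => by have := hS x hx; simp only [coe_range, Set.mem_Iio]; omega) hinj

theorem card_le_of_forall_add_one_mem_imp_eq {S : Finset ℕ} {m a : ℕ} (hS : ∀ x ∈ S, x < m)
    (h : ∀ x ∈ S, x + 1 ∈ S → x = a) : S.card ≤ (m + 2) / 2 := by
  let shift : ℕ → ℕ := fun x => if a < x then x + 1 else x
  have hmono : StrictMono shift := by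
    intro x y hxy
    simp only [shift]
    split_ifs <;> omega
  rw [← card_image_of_injective S hmono.injective]
  refine card_le_of_forall_add_one_notMem (m := m + 1) ?_ ?_
  · simp only [mem_image, forall_exists_index, and_imp, forall_apply_eq_imp_iff₂]
    intro x hx
    have := hS x hx
    simp only [shift]
    split_ifs <;> omega
  · simp only [mem_image, forall_exists_index, and_imp, forall_apply_eq_imp_iff₂, not_exists,
      not_and]
    intro x hx y hy hxy
    have : x + 1 = y → x = a := fun hy' => h x hx (hy' ▸ hy)
    simp only [shift] at hxy
    split_ifs at hxy <;> omega

def zeroAndOdds (n : ℕ) : Finset ℕ := insert 0 ((range (n / 2)).image (2 * · + 1))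

theorem mem_zeroAndOdds {n x : ℕ} : x ∈ zeroAndOdds n ↔ x = 0 ∨ x % 2 = 1 ∧ x < n := by
  simp only [zeroAndOdds, mem_insert, mem_image, mem_range]
  refine or_congr_right ⟨?_, fun h => ⟨x / 2, by omega, by omega⟩⟩
  rintro ⟨k, hk, rfl⟩
  omega

theorem card_zeroAndOdds (n : ℕ) : (zeroAndOdds n).card = n / 2 + 1 := by
  rw [zeroAndOdds, card_insert_of_notMem (by simp), card_image_of_injective _
    (fun x y (h : 2 * x + 1 = 2 * y + 1) => by omega), card_range]

theorem vertexAlpha1_pathGraph {n : ℕ} (hn : 2 ≤ n) :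
    vertexAlpha1 (SimpleGraph.pathGraph n) = (n + 2) / 2 := by
  refine IsGreatest.csSup_eq ⟨?_, ?_⟩
  · have hlt : ∀ x ∈ zeroAndOdds n, x < n := fun x hx => by rw [mem_zeroAndOdds] at hx; omega
    refine ⟨(zeroAndOdds n).attachFin hlt, ?_, by rw [card_attachFin, card_zeroAndOdds]; omega⟩
    rw [isOneNearlyVertexIndep_pathGraph_iff, map_valEmbedding_attachFin]
    simp only [mem_zeroAndOdds]
    exact ⟨0, by omega, by omega, fun x hx hx1 => by omega⟩
  · rintro _ ⟨I, hI, rfl⟩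
    obtain ⟨a, -, -, ha⟩ := isOneNearlyVertexIndep_pathGraph_iff.1 hI
    rw [← card_map Fin.valEmbedding]
    exact card_le_of_forall_add_one_mem_imp_eq (by simp) ha
end

section
/- If G is a connected finite simple graph that contains a cycle and α'₁(G) = 2, then G has at most four vertices. -/
/-!
A cherry `u - v - w` together with an edge `x - y` disjoint from it is a 1-nearly edge
independent set of size three: the two edges of the cherry are its only pair sharing a vertex.
So it suffices to find this configuration in every connected graph with a cycle and at least
five vertices. Five consecutive vertices of a cycle of length at least five carry one. By
connectivity, a triangle or a 4-cycle has a neighbour outside it; a 4-cycle with a pendant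
edge already contains the configuration, and a triangle `a b c` with a pendant edge `u - a`
acquires it once one more vertex is attached to `{u, a, b, c}`.
-/

open scoped Classical

theorem Finset.card_filter_offDiag_triple_eq_two {α : Type*} [DecidableEq α]
    {R : α → α → Prop} [DecidableRel R] (hR : ∀ x y, R x y → R y x) {a b c : α}
    (hab : a ≠ b) (hbc : b ≠ c) (hRab : R a b) (hRac : ¬ R a c) (hRbc : ¬ R b c) :
    (({a, b, c} : Finset α).offDiag.filter fun p => R p.1 p.2).card = 2 := by
  have : (({a, b, c} : Finset α).offDiag.filter fun p => R p.1 p.2) = {(a, b), (b, a)} := by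
    ext ⟨x, y⟩
    simp only [Finset.mem_filter, Finset.mem_offDiag, Finset.mem_insert, Finset.mem_singleton,
      Prod.mk.injEq]
    grind
  rw [this, Finset.card_pair (by simp [hab])]

theorem shareVertex_comm {V : Type*} {e f : Sym2 V} : ShareVertex e f → ShareVertex f e :=
  fun ⟨v, he, hf⟩ => ⟨v, hf, he⟩

theorem shareVertex_iff {V : Type*} {u v x y : V} :
    ShareVertex s(u, v) s(x, y) ↔ u = x ∨ u = y ∨ v = x ∨ v = y := by
  simp only [ShareVertex, Sym2.mem_iff]
  constructor
  · rintro ⟨z, rfl | rfl, rfl | rfl⟩ <;> simp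
  · rintro (rfl | rfl | rfl | rfl) <;> simp

namespace SimpleGraph

variable {V : Type*} {G : SimpleGraph V}

theorem Preconnected.exists_adj_of_card_lt [Fintype V] (hG : G.Preconnected) {S : Finset V}
    {s : V} (hs : s ∈ S) (hS : S.card < Fintype.card V) : ∃ u ∉ S, ∃ t ∈ S, G.Adj u t := by
  obtain ⟨x, -, hx⟩ := Finset.exists_mem_notMem_of_card_lt_card (s := S) (t := Finset.univ) hS
  obtain ⟨d, -, hd₁, hd₂⟩ :=
    (hG x s).some.exists_boundary_dart (↑S)ᶜ (by simpa using hx) (by simpa)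
  exact ⟨d.fst, hd₁, d.snd, by simpa using hd₂, d.adj⟩

/-- A path `u - v - w` and an edge `x - y` disjoint from it: a (not necessarily induced)
copy of `P₃ ∪ K₂`. -/
def HasCherryAndDisjointEdge (G : SimpleGraph V) : Prop :=
  ∃ u v w x y, G.Adj u v ∧ G.Adj v w ∧ G.Adj x y ∧ u ≠ w ∧
    x ≠ u ∧ x ≠ v ∧ x ≠ w ∧ y ≠ u ∧ y ≠ v ∧ y ≠ w

theorem card_le_edgeAlpha1 [Finite V] {M : Finset (Sym2 V)} (hM : IsOneNearlyEdgeIndep G M) :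
    M.card ≤ edgeAlpha1 G := by
  have := Fintype.ofFinite V
  refine le_csSup ⟨Fintype.card (Sym2 V), ?_⟩ ⟨M, hM, rfl⟩
  rintro k ⟨M, -, rfl⟩
  exact M.card_le_univ

theorem HasCherryAndDisjointEdge.three_le_edgeAlpha1 [Finite V]
    (h : G.HasCherryAndDisjointEdge) : 3 ≤ edgeAlpha1 G := by
  obtain ⟨u, v, w, x, y, huv, hvw, hxy, huw, hxu, hxv, hxw, hyu, hyv, hyw⟩ := h
  have hne : s(u, v) ≠ s(v, w) ∧ s(u, v) ≠ s(x, y) ∧ s(v, w) ≠ s(x, y) := by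
    simp only [ne_eq, Sym2.eq_iff]; grind [huv.ne, hvw.ne]
  have hM : IsOneNearlyEdgeIndep G {s(u, v), s(v, w), s(x, y)} := by
    refine ⟨by simp [Set.insert_subset_iff, huv, hvw, hxy], ?_⟩
    have h₁₃ : ¬ ShareVertex s(u, v) s(x, y) := by rw [shareVertex_iff]; grind
    have h₂₃ : ¬ ShareVertex s(v, w) s(x, y) := by rw [shareVertex_iff]; grind
    exact Finset.card_filter_offDiag_triple_eq_two (R := ShareVertex)
      (fun _ _ => shareVertex_comm) hne.1 hne.2.2 (shareVertex_iff.2 (by simp)) h₁₃ h₂₃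
  calc 3 = ({s(u, v), s(v, w), s(x, y)} : Finset (Sym2 V)).card := by
        rw [Finset.card_insert_of_notMem (by simp [hne.1, hne.2.1]),
          Finset.card_pair hne.2.2]
    _ ≤ edgeAlpha1 G := card_le_edgeAlpha1 hM

variable [Fintype V]

theorem hasCherryAndDisjointEdge_of_triangle_of_adj (hG : G.Preconnected)
    (hV : 4 < Fintype.card V) {a b c u : V} (hab : G.Adj a b) (hbc : G.Adj b c) (hca : G.Adj c a)
    (hua : G.Adj u a) (hub : u ≠ b) (huc : u ≠ c) : G.HasCherryAndDisjointEdge := by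
  obtain ⟨w, hw, z, hz, hwz⟩ := hG.exists_adj_of_card_lt (S := {u, a, b, c}) (s := a) (by simp)
    (Finset.card_le_four.trans_lt hV)
  simp only [Finset.mem_insert, Finset.mem_singleton, not_or] at hw hz
  rcases hz with rfl | rfl | rfl | rfl
  · exact ⟨w, z, a, b, c, hwz, hua, hbc, by grind [Adj.ne]⟩
  · exact ⟨w, z, u, b, c, hwz, hua.symm, hbc, by grind [Adj.ne]⟩
  · exact ⟨w, z, c, u, a, hwz, hbc, hua, by grind [Adj.ne]⟩
  · exact ⟨w, z, b, u, a, hwz, hbc.symm, hua, by grind [Adj.ne]⟩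

theorem hasCherryAndDisjointEdge_of_triangle (hG : G.Preconnected) (hV : 4 < Fintype.card V)
    {a b c : V} (hab : G.Adj a b) (hbc : G.Adj b c) (hca : G.Adj c a) :
    G.HasCherryAndDisjointEdge := by
  obtain ⟨u, hu, z, hz, huz⟩ := hG.exists_adj_of_card_lt (S := {a, b, c}) (s := a) (by simp)
    (Finset.card_le_three.trans_lt (by omega))
  simp only [Finset.mem_insert, Finset.mem_singleton, not_or] at hu hz
  obtain ⟨hua, hub, huc⟩ := hu
  rcases hz with rfl | rfl | rfl
  · exact hasCherryAndDisjointEdge_of_triangle_of_adj hG hV hab hbc hca huz hub huc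
  · exact hasCherryAndDisjointEdge_of_triangle_of_adj hG hV hbc hca hab huz huc hua
  · exact hasCherryAndDisjointEdge_of_triangle_of_adj hG hV hca hab hbc huz hua hub

theorem hasCherryAndDisjointEdge_of_square (hG : G.Preconnected) (hV : 4 < Fintype.card V)
    {a b c d : V} (hab : G.Adj a b) (hbc : G.Adj b c) (hcd : G.Adj c d) (hda : G.Adj d a)
    (hac : a ≠ c) (hbd : b ≠ d) : G.HasCherryAndDisjointEdge := by
  obtain ⟨u, hu, z, hz, huz⟩ := hG.exists_adj_of_card_lt (S := {a, b, c, d}) (s := a) (by simp)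
    (Finset.card_le_four.trans_lt hV)
  simp only [Finset.mem_insert, Finset.mem_singleton, not_or] at hu hz
  rcases hz with rfl | rfl | rfl | rfl
  · exact ⟨u, z, b, c, d, huz, hab, hcd, by grind [Adj.ne]⟩
  · exact ⟨u, z, c, d, a, huz, hbc, hda, by grind [Adj.ne]⟩
  · exact ⟨u, z, d, a, b, huz, hcd, hab, by grind [Adj.ne]⟩
  · exact ⟨u, z, a, b, c, huz, hda, hbc, by grind [Adj.ne]⟩

theorem Walk.IsCycle.hasCherryAndDisjointEdge (hG : G.Preconnected) (hV : 4 < Fintype.card V)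
    {v : V} {c : G.Walk v v} (hc : c.IsCycle) : G.HasCherryAndDisjointEdge := by
  set x := c.getVert
  have h3 := hc.three_le_length
  have hadj : ∀ i < c.length, G.Adj (x i) (x (i + 1)) := fun _ hi => c.adj_getVert_succ hi
  have hne : ∀ i j, i < j → j < c.length → x j ≠ x i :=
    fun _ _ hij hj h => hij.ne' (hc.getVert_injOn' (by simp; omega) (by simp; omega) h)
  have hclose : G.Adj (x (c.length - 1)) (x 0) := by
    have hlast : x c.length = x 0 := c.getVert_length.trans c.getVert_zero.symm
    simpa [Nat.sub_add_cancel (by omega : 1 ≤ c.length), hlast] using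
      hadj (c.length - 1) (by omega)
  obtain h | h | h : c.length = 3 ∨ c.length = 4 ∨ 5 ≤ c.length := by omega
  · rw [h] at hclose
    exact hasCherryAndDisjointEdge_of_triangle hG hV (hadj 0 (by omega)) (hadj 1 (by omega))
      hclose
  · rw [h] at hclose
    refine hasCherryAndDisjointEdge_of_square hG hV (hadj 0 ?_) (hadj 1 ?_) (hadj 2 ?_) hclose
      (hne 0 2 ?_ ?_).symm (hne 1 3 ?_ ?_).symm <;> omega
  · refine ⟨x 0, x 1, x 2, x 3, x 4, hadj 0 ?_, hadj 1 ?_, hadj 3 ?_, (hne 0 2 ?_ ?_).symm,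
      hne 0 3 ?_ ?_, hne 1 3 ?_ ?_, hne 2 3 ?_ ?_, hne 0 4 ?_ ?_, hne 1 4 ?_ ?_,
      hne 2 4 ?_ ?_⟩ <;> omega

end SimpleGraph

theorem card_le_four_of_connected_cyclic {V : Type*} [Fintype V]
    (G : SimpleGraph V) (hconn : G.Connected) (hcyc : ¬ G.IsAcyclic)
    (h2 : edgeAlpha1 G = 2) : Fintype.card V ≤ 4 := by
  by_contra! hV
  obtain ⟨v, c, hc⟩ : ∃ v, ∃ c : G.Walk v v, c.IsCycle := by
    simpa [SimpleGraph.IsAcyclic] using hcyc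
  have := (hc.hasCherryAndDisjointEdge hconn.preconnected hV).three_le_edgeAlpha1
  omega
end
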